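/- Let M be a positive natural number and let x_1, …, x_M be complex numbers, with x_m = x_{mI} + i·x_{mQ}, satisfying Σ_{m=1}^M x_{mI}² = Σ_{m=1}^M x_{mQ}² and Σ_{m=1}^M x_{mI}·x_{mQ} = 0. For ζ ∈ [0,1] and θ ∈ ℝ define the hybrid-shaped constellation by the real linear map [v_{mI}, v_{mQ}]ᵀ = A(ζ)·R(θ)·[x_{mI}, x_{mQ}]ᵀ, where A(ζ) = diag(√(1+ζ), √(1−ζ)) and R(θ) is the rotation matrix [[cos θ, −sin θ],[sin θ, cos θ]]. Then Σ_{m=1}^M |v_m|² = Σ_{m=1}^M |x_m|², and Σ_{m=1}^M v_m² = ζ·Σ_{m=1}^M |x_m|², where v_m = v_{mI} + i·v_{mQ}; hence if Σ|x_m|² > 0 the circularity coefficient of the transformed constellation is ζ. -/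

import Mathlib

/-!
Multiplying by `e^{iθ}` rotates the constellation and multiplies its pseudo-power `Σ x_m²` by
`e^{2iθ}`, so the rotated constellation still has pseudo-power `0`, i.e. `Σ y_I² = Σ y_Q²` and
`Σ y_I y_Q = 0`. For such a constellation the stretch `A(ζ)` has total power
`(1 + ζ) Σ y_I² + (1 - ζ) Σ y_Q² = Σ |y|²` and pseudo-power
`(1 + ζ) Σ y_I² - (1 - ζ) Σ y_Q² = ζ Σ |y|²`, the cross term vanishing.
-/

open Complex Finset

/-- The map `A(ζ) = diag(√(1+ζ), √(1−ζ))` acting on the in-phase and quadrature parts. -/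
noncomputable def hybridStretch (ζ : ℝ) (z : ℂ) : ℂ :=
  ((√(1 + ζ) * z.re : ℝ) : ℂ) + I * ((√(1 - ζ) * z.im : ℝ) : ℂ)

theorem re_exp_mul_I_mul (θ : ℝ) (z : ℂ) :
    (cexp (θ * I) * z).re = Real.cos θ * z.re - Real.sin θ * z.im := by
  simp [mul_re, exp_ofReal_mul_I_re, exp_ofReal_mul_I_im]

theorem im_exp_mul_I_mul (θ : ℝ) (z : ℂ) :
    (cexp (θ * I) * z).im = Real.sin θ * z.re + Real.cos θ * z.im := by
  simp [mul_im, exp_ofReal_mul_I_re, exp_ofReal_mul_I_im, add_comm]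

theorem sq_norm_hybridStretch {ζ : ℝ} (hζ₀ : -1 ≤ ζ) (hζ₁ : ζ ≤ 1) (z : ℂ) :
    ‖hybridStretch ζ z‖ ^ 2 = (1 + ζ) * z.re ^ 2 + (1 - ζ) * z.im ^ 2 := by
  have hp : √(1 + ζ) ^ 2 = 1 + ζ := Real.sq_sqrt (by linarith)
  have hm : √(1 - ζ) ^ 2 = 1 - ζ := Real.sq_sqrt (by linarith)
  rw [Complex.sq_norm, normSq_apply]
  simp only [hybridStretch, add_re, add_im, ofReal_re, ofReal_im, mul_re, mul_im, I_re, I_im]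
  linear_combination z.re ^ 2 * hp + z.im ^ 2 * hm

theorem hybridStretch_sq {ζ : ℝ} (hζ₀ : -1 ≤ ζ) (hζ₁ : ζ ≤ 1) (z : ℂ) :
    hybridStretch ζ z ^ 2 = ((1 + ζ) * z.re ^ 2 - (1 - ζ) * z.im ^ 2 : ℝ) +
      ((2 * √(1 + ζ) * √(1 - ζ)) * (z.re * z.im) : ℝ) * I := by
  have hp : √(1 + ζ) ^ 2 = 1 + ζ := Real.sq_sqrt (by linarith)
  have hm : √(1 - ζ) ^ 2 = 1 - ζ := Real.sq_sqrt (by linarith)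
  apply Complex.ext <;>
    simp only [hybridStretch, pow_two, add_re, add_im, ofReal_re, ofReal_im, mul_re, mul_im,
      I_re, I_im]
  · linear_combination z.re ^ 2 * hp - z.im ^ 2 * hm
  · ring

section Constellation

variable {ι : Type*} [Fintype ι]

theorem sum_sq_eq_zero_iff (x : ι → ℂ) :
    ∑ i, x i ^ 2 = 0 ↔
      ∑ i, (x i).re ^ 2 = ∑ i, (x i).im ^ 2 ∧ ∑ i, (x i).re * (x i).im = 0 := by
  have hre : (∑ i, x i ^ 2).re = ∑ i, (x i).re ^ 2 - ∑ i, (x i).im ^ 2 := by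
    simp [re_sum, pow_two, mul_re, sum_sub_distrib]
  have him : (∑ i, x i ^ 2).im = 2 * ∑ i, (x i).re * (x i).im := by
    simp [im_sum, pow_two, mul_im, mul_sum]; ring_nf
  rw [Complex.ext_iff, hre, him, zero_re, zero_im, sub_eq_zero]
  simp

theorem sum_sq_norm_eq (x : ι → ℂ) :
    ∑ i, ‖x i‖ ^ 2 = ∑ i, (x i).re ^ 2 + ∑ i, (x i).im ^ 2 := by
  simp [Complex.sq_norm, normSq_apply, ← pow_two, sum_add_distrib]

theorem sum_sq_norm_hybridStretch {ζ : ℝ} (hζ₀ : -1 ≤ ζ) (hζ₁ : ζ ≤ 1) {y : ι → ℂ}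
    (hsym : ∑ i, (y i).re ^ 2 = ∑ i, (y i).im ^ 2) :
    ∑ i, ‖hybridStretch ζ (y i)‖ ^ 2 = ∑ i, ‖y i‖ ^ 2 := by
  simp only [sq_norm_hybridStretch hζ₀ hζ₁, sum_add_distrib, ← mul_sum, sum_sq_norm_eq]
  rw [hsym]
  ring

theorem sum_hybridStretch_sq {ζ : ℝ} (hζ₀ : -1 ≤ ζ) (hζ₁ : ζ ≤ 1) {y : ι → ℂ}
    (hsym : ∑ i, (y i).re ^ 2 = ∑ i, (y i).im ^ 2) (huncorr : ∑ i, (y i).re * (y i).im = 0) :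
    ∑ i, hybridStretch ζ (y i) ^ 2 = ζ * ((∑ i, ‖y i‖ ^ 2 : ℝ) : ℂ) := by
  simp only [hybridStretch_sq hζ₀ hζ₁, sum_add_distrib, ← sum_mul, ← ofReal_sum,
    sum_sub_distrib, ← mul_sum, huncorr, sum_sq_norm_eq, hsym]
  push_cast
  ring

end Constellation

theorem hybrid_shaping_power_invariance_general
    (M : ℕ) (x : Fin M → ℂ)
    (hsym : (∑ m, (x m).re ^ 2) = ∑ m, (x m).im ^ 2)
    (huncorr : (∑ m, (x m).re * (x m).im) = 0)
    (ζ : ℝ) (hζ0 : 0 ≤ ζ) (hζ1 : ζ ≤ 1) (θ : ℝ)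
    (vI vQ : Fin M → ℝ)
    (hvI : ∀ m, vI m = Real.sqrt (1 + ζ) *
        (Real.cos θ * (x m).re - Real.sin θ * (x m).im))
    (hvQ : ∀ m, vQ m = Real.sqrt (1 - ζ) *
        (Real.sin θ * (x m).re + Real.cos θ * (x m).im))
    (v : Fin M → ℂ) (hv : ∀ m, v m = ((vI m : ℝ) : ℂ) + Complex.I * ((vQ m : ℝ) : ℂ)) :
    (∑ m, ‖v m‖ ^ 2) = ∑ m, ‖x m‖ ^ 2 ∧
    (∑ m, (v m) ^ 2) = (ζ : ℂ) * ((∑ m, ‖x m‖ ^ 2 : ℝ) : ℂ) ∧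
    ((∑ m, ‖x m‖ ^ 2) > 0 →
      ‖∑ m, (v m) ^ 2‖ / (∑ m, ‖v m‖ ^ 2) = ζ) := by
  set y : Fin M → ℂ := fun m => cexp (θ * I) * x m
  have hv_eq : v = fun m => hybridStretch ζ (y m) := by
    ext1 m
    rw [hv, hvI, hvQ, hybridStretch, re_exp_mul_I_mul, im_exp_mul_I_mul]
  have hy_power : ∑ m, ‖y m‖ ^ 2 = ∑ m, ‖x m‖ ^ 2 := by
    simp [y, norm_exp_ofReal_mul_I]
  have hy_pseudo : ∑ m, y m ^ 2 = 0 := by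
    simp only [y, mul_pow, ← mul_sum, (sum_sq_eq_zero_iff x).2 ⟨hsym, huncorr⟩, mul_zero]
  obtain ⟨hsym', huncorr'⟩ := (sum_sq_eq_zero_iff y).1 hy_pseudo
  have hζ : -1 ≤ ζ := by linarith
  have h_power : ∑ m, ‖v m‖ ^ 2 = ∑ m, ‖x m‖ ^ 2 := by
    rw [hv_eq, sum_sq_norm_hybridStretch hζ hζ1 hsym', hy_power]
  have h_pseudo : ∑ m, v m ^ 2 = ζ * ((∑ m, ‖x m‖ ^ 2 : ℝ) : ℂ) := by
    rw [hv_eq, sum_hybridStretch_sq hζ hζ1 hsym' huncorr', hy_power]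
  refine ⟨h_power, h_pseudo, fun hpos => ?_⟩
  rw [h_pseudo, h_power, norm_mul, norm_real, norm_real, Real.norm_of_nonneg hζ0,
    Real.norm_of_nonneg hpos.le, mul_div_cancel_right₀ _ hpos.ne']

/-- Hybrid-shaping parameterization (Section V-A): rotating a symmetric constellation
by `R(θ)` and then translating by `A(ζ) = diag(√(1+ζ), √(1−ζ))` preserves the total
power and induces pseudo-power `ζ Σ|x_m|²`, i.e. circularity coefficient `ζ`. -/
theorem hybrid_shaping_power_invariance
    (M : ℕ) (hM : 0 < M) (x : Fin M → ℂ)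
    (hsym : (∑ m, (x m).re ^ 2) = ∑ m, (x m).im ^ 2)
    (huncorr : (∑ m, (x m).re * (x m).im) = 0)
    (ζ : ℝ) (hζ0 : 0 ≤ ζ) (hζ1 : ζ ≤ 1) (θ : ℝ)
    (vI vQ : Fin M → ℝ)
    (hvI : ∀ m, vI m = Real.sqrt (1 + ζ) *
        (Real.cos θ * (x m).re - Real.sin θ * (x m).im))
    (hvQ : ∀ m, vQ m = Real.sqrt (1 - ζ) *
        (Real.sin θ * (x m).re + Real.cos θ * (x m).im))
    (v : Fin M → ℂ) (hv : ∀ m, v m = ((vI m : ℝ) : ℂ) + Complex.I * ((vQ m : ℝ) : ℂ)) :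
    (∑ m, ‖v m‖ ^ 2) = ∑ m, ‖x m‖ ^ 2 ∧
    (∑ m, (v m) ^ 2) = (ζ : ℂ) * ((∑ m, ‖x m‖ ^ 2 : ℝ) : ℂ) ∧
    ((∑ m, ‖x m‖ ^ 2) > 0 →
      ‖∑ m, (v m) ^ 2‖ / (∑ m, ‖v m‖ ^ 2) = ζ) :=
  hybrid_shaping_power_invariance_general M x hsym huncorr ζ hζ0 hζ1 θ vI vQ hvI hvQ v hv
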